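/- arXiv:cs/0303008 — 6 statements merged into one kernel-verified Lean document; each statement's English description precedes it below -/
import Mathlib

section
/- If x is a point of the linear ordering polytope relaxation B_n such that x i j ∈ {0, 1} for every pair i ≠ j, then the relation r defined by r i j ↔ (i ≠ j ∧ x i j = 1) is a strict total order on Fin n, and x is its incidence vector. Hence the 0/1-valued points of B_n are exactly the incidence vectors of strict total orders (the feasible solutions of the linear ordering problem). -/
open scoped BigOperators

/-- A point of the linear ordering polytope relaxation `B_n`. -/
def IsBn {n : ℕ} (x : Fin n → Fin n → ℝ) : Prop :=
  (∀ i, x i i = 0) ∧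
  (∀ i j : Fin n, i ≠ j → 0 ≤ x i j ∧ x i j ≤ 1) ∧
  (∀ i j : Fin n, i ≠ j → x i j + x j i = 1) ∧
  (∀ i j k : Fin n, i ≠ j → i ≠ k → j ≠ k →
    0 ≤ x i j + x j k - x i k ∧ x i j + x j k - x i k ≤ 1)

/-- A strict total order on `Fin n`: irreflexive, transitive and total. -/
def IsSTO {n : ℕ} (r : Fin n → Fin n → Prop) : Prop :=
  (∀ i, ¬ r i i) ∧ (∀ i j k, r i j → r j k → r i k) ∧
  (∀ i j : Fin n, i ≠ j → r i j ∨ r j i)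

open Classical in
/-- The incidence vector `χ_r` of a relation `r`. -/
noncomputable def chi {n : ℕ} (r : Fin n → Fin n → Prop) : Fin n → Fin n → ℝ :=
  fun i j => if r i j then 1 else 0

theorem integral_points_of_Bn_are_orders {n : ℕ} (x : Fin n → Fin n → ℝ)
    (hx : IsBn x) (h01 : ∀ i j : Fin n, i ≠ j → x i j = 0 ∨ x i j = 1) :
    IsSTO (fun i j : Fin n => i ≠ j ∧ x i j = 1) ∧
    x = chi (fun i j : Fin n => i ≠ j ∧ x i j = 1) := by
  obtain ⟨hdiag, hbd, hsum, htri⟩ := hx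
  constructor
  · refine ⟨fun i h => h.1 rfl, ?_, ?_⟩
    · rintro i j k ⟨hij, hxij⟩ ⟨hjk, hxjk⟩
      have hik : i ≠ k := by
        rintro rfl
        have := hsum i j hij
        rw [hxij] at this
        have := hxjk
        linarith
      refine ⟨hik, ?_⟩
      have h1 := (htri i j k hij hik hjk).2
      have h2 := (hbd i k hik).2
      linarith
    · intro i j hij
      rcases h01 i j hij with h | h
      · right
        have := hsum i j hij
        exact ⟨Ne.symm hij, by linarith⟩
      · exact Or.inl ⟨hij, h⟩
  · funext i j
    unfold chi
    by_cases hij : i = j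
    · subst hij; simp [hdiag i]
    · rcases h01 i j hij with h | h
      · rw [h, if_neg]; rintro ⟨_, h1⟩; linarith
      · rw [h, if_pos ⟨hij, h⟩]
end

section
/- For every strict total order r on Fin n, the incidence vector χ_r is an extreme point of the linear ordering polytope relaxation B_n (viewed as a convex subset of matrices Fin n → Fin n → ℝ). Thus every feasible solution of the linear ordering problem gives an integer vertex of B_n. -/
open scoped BigOperators

/-!
`B_n` lies in the unit cube `[0,1]^(n×n)`, whose extreme points are its `0/1` vectors. The
incidence vector of a strict total order is a `0/1` vector lying in `B_n`, hence it is extreme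
in the cube and a fortiori in the smaller set `B_n`.
-/

open Set

def unitCube (ι κ : Type*) : Set (ι → κ → ℝ) :=
  univ.pi fun _ => univ.pi fun _ => Icc 0 1

theorem mem_extremePoints_unitCube {ι κ : Type*} {x : ι → κ → ℝ}
    (hx : ∀ i j, x i j = 0 ∨ x i j = 1) : x ∈ (unitCube ι κ).extremePoints ℝ := by
  simp only [unitCube, extremePoints_pi, extremePoints_Icc zero_le_one, mem_univ_pi,
    mem_insert_iff, mem_singleton_iff]
  exact hx

theorem chi_eq_zero_or_eq_one {n : ℕ} (r : Fin n → Fin n → Prop) (i j : Fin n) :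
    chi r i j = 0 ∨ chi r i j = 1 := by
  unfold chi
  split_ifs <;> simp

theorem IsBn.subset_unitCube {n : ℕ} : {x : Fin n → Fin n → ℝ | IsBn x} ⊆ unitCube _ _ := by
  rintro x ⟨hdiag, hbound, -, -⟩ i - j -
  rcases eq_or_ne i j with rfl | hij
  · simp [hdiag i]
  · exact hbound i j hij

namespace IsSTO

variable {n : ℕ} {r : Fin n → Fin n → Prop}

theorem asymm (hr : IsSTO r) {i j : Fin n} (hij : r i j) : ¬ r j i :=
  fun hji => hr.1 i (hr.2.1 i j i hij hji)

theorem chi_add_chi_swap (hr : IsSTO r) {i j : Fin n} (hij : i ≠ j) :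
    chi r i j + chi r j i = 1 := by
  rcases hr.2.2 i j hij with h | h <;> simp [chi, h, hr.asymm h]

theorem chi_add_chi_le (hr : IsSTO r) (i j k : Fin n) :
    chi r i j + chi r j k ≤ 1 + chi r i k := by
  by_cases hij : r i j <;> by_cases hjk : r j k
  · simp [chi, hij, hjk, hr.2.1 i j k hij hjk]
  all_goals simp only [chi, hij, hjk, if_true, if_false]; split_ifs <;> norm_num

theorem chi_le_chi_add_chi (hr : IsSTO r) {i j k : Fin n} (hij : i ≠ j) (hjk : j ≠ k) :
    chi r i k ≤ chi r i j + chi r j k := by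
  by_cases hik : r i k
  · have hij_or_hjk : r i j ∨ r j k := by
      by_contra! h
      exact hr.asymm hik
        (hr.2.1 k j i ((hr.2.2 j k hjk).resolve_left h.2) ((hr.2.2 i j hij).resolve_left h.1))
    rcases hij_or_hjk with h | h <;> simp only [chi, hik, h, if_true] <;> split_ifs <;> norm_num
  · simp only [chi, hik, if_false]
    split_ifs <;> norm_num

theorem chi_mem_Bn (hr : IsSTO r) : IsBn (chi r) := by
  refine ⟨fun i => by simp [chi, hr.1 i], fun i j _ => ?_, fun i j hij => hr.chi_add_chi_swap hij,
    fun i j k hij _ hjk => ⟨?_, ?_⟩⟩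
  · rcases chi_eq_zero_or_eq_one r i j with h | h <;> simp [h]
  · linarith [hr.chi_le_chi_add_chi hij hjk]
  · linarith [hr.chi_add_chi_le i j k]

end IsSTO

theorem incidence_extremePoint_Bn {n : ℕ} (r : Fin n → Fin n → Prop)
    (hr : IsSTO r) :
    chi r ∈ Set.extremePoints ℝ {x : Fin n → Fin n → ℝ | IsBn x} :=
  inter_extremePoints_subset_extremePoints_of_subset IsBn.subset_unitCube
    ⟨hr.chi_mem_Bn, mem_extremePoints_unitCube (chi_eq_zero_or_eq_one r)⟩
end

section
/- Let m ≥ 2, n ≥ 2m, and let a, b : Fin m → Fin n be injective maps with disjoint ranges (write i_l = a(l), j_l = b(l)). Define the point x⁰ : Fin n → Fin n → ℝ by x⁰(i_l, j_q) = 0 and x⁰(j_q, i_l) = 1 for all l ≠ q, x⁰(u,u) = 0 for all u, and x⁰(u,v) = 1/2 for every other pair u ≠ v (in particular x⁰(i_l, j_l) = x⁰(j_l, i_l) = 1/2). Then x⁰ is a point of the linear ordering polytope relaxation B_n. -/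
open scoped BigOperators

open Classical in
/-- The fractional point `x⁰` determined by the "fence" structure given by `a`, `b`:
`x⁰(a l, b q) = 0` and `x⁰(b q, a l) = 1` for `l ≠ q`, diagonal entries are `0`,
and all other entries are `1/2`. -/
noncomputable def xZero {m n : ℕ} (a b : Fin m → Fin n) : Fin n → Fin n → ℝ :=
  fun u v =>
    if u = v then 0
    else if ∃ l q, l ≠ q ∧ u = a l ∧ v = b q then 0
    else if ∃ l q, l ≠ q ∧ u = b q ∧ v = a l then 1
    else 1 / 2

section Aux

open Classical

variable {m n : ℕ} {a b : Fin m → Fin n}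

lemma xZero_diag (u : Fin n) : xZero a b u u = 0 := by simp [xZero]

lemma xZero_zero {u v : Fin n} (huv : u ≠ v)
    (h : ∃ l q, l ≠ q ∧ u = a l ∧ v = b q) : xZero a b u v = 0 := by
  simp [xZero, huv, h]

lemma xZero_one (hab : ∀ l q, a l ≠ b q) {u v : Fin n} (huv : u ≠ v)
    (h : ∃ l q, l ≠ q ∧ u = b q ∧ v = a l) : xZero a b u v = 1 := by
  have h0 : ¬ ∃ l q, l ≠ q ∧ u = a l ∧ v = b q := by
    rintro ⟨l, q, -, hu, -⟩
    obtain ⟨l', q', -, hu', -⟩ := h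
    exact hab l q' (hu.symm.trans hu')
  simp [xZero, huv, h0, h]

lemma xZero_half {u v : Fin n} (huv : u ≠ v)
    (h0 : ¬ ∃ l q, l ≠ q ∧ u = a l ∧ v = b q)
    (h1 : ¬ ∃ l q, l ≠ q ∧ u = b q ∧ v = a l) : xZero a b u v = 1 / 2 := by
  simp [xZero, huv, h0, h1]

lemma xZero_nonneg (u v : Fin n) : 0 ≤ xZero a b u v := by
  unfold xZero; split_ifs <;> norm_num

lemma xZero_le_one (u v : Fin n) : xZero a b u v ≤ 1 := by
  unfold xZero; split_ifs <;> norm_num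

lemma xZero_ge_half {u v : Fin n} (huv : u ≠ v)
    (h : ¬ ∃ l q, l ≠ q ∧ u = a l ∧ v = b q) : 1 / 2 ≤ xZero a b u v := by
  unfold xZero
  rw [if_neg huv, if_neg h]
  split_ifs <;> norm_num

lemma xZero_sum (hab : ∀ l q, a l ≠ b q) {u v : Fin n} (huv : u ≠ v) :
    xZero a b u v + xZero a b v u = 1 := by
  by_cases h0 : ∃ l q, l ≠ q ∧ u = a l ∧ v = b q
  · obtain ⟨l, q, hlq, hu, hv⟩ := h0
    rw [xZero_zero huv ⟨l, q, hlq, hu, hv⟩,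
      xZero_one hab huv.symm ⟨l, q, hlq, hv, hu⟩]
    ring
  · by_cases h1 : ∃ l q, l ≠ q ∧ u = b q ∧ v = a l
    · obtain ⟨l, q, hlq, hu, hv⟩ := h1
      rw [xZero_one hab huv ⟨l, q, hlq, hu, hv⟩,
        xZero_zero huv.symm ⟨l, q, hlq, hv, hu⟩]
      ring
    · rw [xZero_half huv h0 h1, xZero_half huv.symm ?_ ?_]
      · ring
      · rintro ⟨l, q, hlq, hv, hu⟩
        exact h1 ⟨l, q, hlq, hu, hv⟩
      · rintro ⟨l, q, hlq, hv, hu⟩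
        exact h0 ⟨l, q, hlq, hu, hv⟩

lemma xZero_tri (hab : ∀ l q, a l ≠ b q) {i j k : Fin n}
    (hij : i ≠ j) (hik : i ≠ k) (hjk : j ≠ k) :
    0 ≤ xZero a b i j + xZero a b j k - xZero a b i k := by
  by_cases h0 : ∃ l q, l ≠ q ∧ i = a l ∧ k = b q
  · rw [xZero_zero hik h0]
    have := xZero_nonneg (a := a) (b := b) i j
    have := xZero_nonneg (a := a) (b := b) j k
    linarith
  · by_cases h1 : ∃ l q, l ≠ q ∧ i = b q ∧ k = a l
    · obtain ⟨l, q, hlq, hi, hk⟩ := h1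
      have hij2 : 1 / 2 ≤ xZero a b i j := by
        refine xZero_ge_half hij ?_
        rintro ⟨l', q', -, hi', -⟩
        exact hab l' q (hi'.symm.trans hi)
      have hjk2 : 1 / 2 ≤ xZero a b j k := by
        refine xZero_ge_half hjk ?_
        rintro ⟨l', q', -, -, hk'⟩
        exact hab l q' (hk.symm.trans hk')
      have := xZero_le_one (a := a) (b := b) i k
      linarith
    · rw [xZero_half hik h0 h1]
      by_cases h2 : ∃ l q, l ≠ q ∧ i = a l ∧ j = b q
      · obtain ⟨l, q, hlq, hi, hj⟩ := h2
        have hjk2 : 1 / 2 ≤ xZero a b j k := by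
          refine xZero_ge_half hjk ?_
          rintro ⟨l', q', -, hj', -⟩
          exact hab l' q (hj'.symm.trans hj)
        have := xZero_nonneg (a := a) (b := b) i j
        linarith
      · have hij2 : 1 / 2 ≤ xZero a b i j := xZero_ge_half hij h2
        have := xZero_nonneg (a := a) (b := b) j k
        linarith

end Aux

theorem xZero_mem_Bn {m n : ℕ} (hm : 2 ≤ m) (hn : 2 * m ≤ n)
    (a b : Fin m → Fin n) (ha : Function.Injective a) (hb : Function.Injective b)
    (hab : ∀ l q, a l ≠ b q) :
    IsBn (xZero a b) := by
  refine ⟨xZero_diag, fun i j hij => ⟨xZero_nonneg i j, xZero_le_one i j⟩,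
    fun i j hij => xZero_sum hab hij, fun i j k hij hik hjk => ?_⟩
  constructor
  · exact xZero_tri hab hij hik hjk
  · have h := xZero_tri hab hjk.symm hik.symm hij.symm
    have e1 := xZero_sum hab hij
    have e2 := xZero_sum hab hjk
    have e3 := xZero_sum hab hik
    linarith
end

section
/- Let m ≥ 3 and n = 2m, and let a, b : Fin m → Fin n be injective maps with disjoint ranges covering all of Fin n (write i_l = a(l), j_l = b(l)). Define x⁰ : Fin n → Fin n → ℝ by x⁰(i_l, j_q) = 0 and x⁰(j_q, i_l) = 1 for all l ≠ q, x⁰(u,u) = 0 for all u, and x⁰(u,v) = 1/2 for every other pair u ≠ v. Then x⁰ is an extreme point of the linear ordering polytope relaxation B_n. In particular, B_n has non-integer vertices. -/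
open scoped BigOperators

theorem xZero_extremePoint_Bn {m : ℕ} (hm : 3 ≤ m)
    (a b : Fin m → Fin (2 * m))
    (ha : Function.Injective a) (hb : Function.Injective b)
    (hab : ∀ l q, a l ≠ b q)
    (hcov : ∀ u : Fin (2 * m), (∃ l, u = a l) ∨ (∃ l, u = b l)) :
    xZero a b ∈ Set.extremePoints ℝ {x : Fin (2 * m) → Fin (2 * m) → ℝ | IsBn x} := by
  classical
  have hba : ∀ l q : Fin m, b l ≠ a q := fun l q h => hab q l h.symm
  have haa : ∀ l q : Fin m, l ≠ q → a l ≠ a q := fun l q h hh => h (ha hh)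
  have hbb : ∀ l q : Fin m, l ≠ q → b l ≠ b q := fun l q h hh => h (hb hh)
  set x := xZero a b with hxdef
  -- value lemmas
  have hx_ab_ne : ∀ l q : Fin m, l ≠ q → x (a l) (b q) = 0 := by
    intro l q hlq
    show xZero a b (a l) (b q) = 0
    unfold xZero
    rw [if_neg (hab l q), if_pos ⟨l, q, hlq, rfl, rfl⟩]
  have hx_ba_ne : ∀ l q : Fin m, l ≠ q → x (b q) (a l) = 1 := by
    intro l q hlq
    show xZero a b (b q) (a l) = 1
    unfold xZero
    rw [if_neg (hba q l), if_neg ?_, if_pos ⟨l, q, hlq, rfl, rfl⟩]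
    rintro ⟨l', q', _, h1, _⟩
    exact hba q l' h1
  have hx_aa : ∀ l q : Fin m, l ≠ q → x (a l) (a q) = 1/2 := by
    intro l q hlq
    show xZero a b (a l) (a q) = 1/2
    unfold xZero
    rw [if_neg (haa l q hlq), if_neg ?_, if_neg ?_]
    · rintro ⟨l', q', _, h1, _⟩; exact hba q' l h1.symm
    · rintro ⟨l', q', _, _, h2⟩; exact hab q q' h2
  have hx_bb : ∀ l q : Fin m, l ≠ q → x (b l) (b q) = 1/2 := by
    intro l q hlq
    show xZero a b (b l) (b q) = 1/2
    unfold xZero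
    rw [if_neg (hbb l q hlq), if_neg ?_, if_neg ?_]
    · rintro ⟨l', q', _, _, h2⟩; exact hba q l' h2
    · rintro ⟨l', q', _, h1, _⟩; exact hba l l' h1
  have hx_ab_eq : ∀ l : Fin m, x (a l) (b l) = 1/2 := by
    intro l
    show xZero a b (a l) (b l) = 1/2
    unfold xZero
    rw [if_neg (hab l l), if_neg ?_, if_neg ?_]
    · rintro ⟨l', q', _, h1, _⟩; exact hab l q' h1
    · rintro ⟨l', q', hne, h1, h2⟩
      exact hne ((ha h1).symm.trans (hb h2))
  have hx_ba_eq : ∀ l : Fin m, x (b l) (a l) = 1/2 := by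
    intro l
    show xZero a b (b l) (a l) = 1/2
    unfold xZero
    rw [if_neg (hba l l), if_neg ?_, if_neg ?_]
    · rintro ⟨l', q', hne, h1, h2⟩
      exact hne ((ha h2).symm.trans (hb h1))
    · rintro ⟨l', q', _, h1, _⟩; exact hba l l' h1
  have hx_diag : ∀ u, x u u = 0 := by
    intro u; show xZero a b u u = 0; unfold xZero; rw [if_pos rfl]
  have hx_values : ∀ u v, x u v = 0 ∨ x u v = 1/2 ∨ x u v = 1 := by
    intro u v
    show xZero a b u v = 0 ∨ xZero a b u v = 1/2 ∨ xZero a b u v = 1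
    unfold xZero
    split_ifs <;> norm_num
  have hx_nonneg : ∀ u v, 0 ≤ x u v := by
    intro u v; rcases hx_values u v with h | h | h <;> rw [h] <;> norm_num
  have hx_le_one : ∀ u v, x u v ≤ 1 := by
    intro u v; rcases hx_values u v with h | h | h <;> rw [h] <;> norm_num
  have hx_anti : ∀ u v, u ≠ v → x u v + x v u = 1 := by
    intro u v huv
    rcases hcov u with ⟨l, rfl⟩ | ⟨l, rfl⟩ <;> rcases hcov v with ⟨q, rfl⟩ | ⟨q, rfl⟩
    · have hlq : l ≠ q := fun h => huv (by rw [h])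
      rw [hx_aa l q hlq, hx_aa q l hlq.symm]; norm_num
    · by_cases h : l = q
      · subst h; rw [hx_ab_eq l, hx_ba_eq l]; norm_num
      · rw [hx_ab_ne l q h, hx_ba_ne l q h]; norm_num
    · by_cases h : q = l
      · subst h; rw [hx_ba_eq q, hx_ab_eq q]; norm_num
      · rw [hx_ba_ne q l h, hx_ab_ne q l h]; norm_num
    · have hlq : l ≠ q := fun h => huv (by rw [h])
      rw [hx_bb l q hlq, hx_bb q l hlq.symm]; norm_num
  have hx_zero_imp : ∀ u v, u ≠ v → x u v = 0 →
      ∃ l q, l ≠ q ∧ u = a l ∧ v = b q := by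
    intro u v huv h
    by_contra hc
    have : x u v = (if u = v then (0:ℝ)
        else if ∃ l q, l ≠ q ∧ u = a l ∧ v = b q then 0
        else if ∃ l q, l ≠ q ∧ u = b q ∧ v = a l then 1
        else 1 / 2) := rfl
    rw [if_neg huv, if_neg hc] at this
    rw [this] at h
    split_ifs at h <;> norm_num at h
  have hx_one_imp : ∀ u v, u ≠ v → x u v = 1 →
      ∃ l q, l ≠ q ∧ u = b q ∧ v = a l := by
    intro u v huv h
    by_contra hc
    have : x u v = (if u = v then (0:ℝ)
        else if ∃ l q, l ≠ q ∧ u = a l ∧ v = b q then 0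
        else if ∃ l q, l ≠ q ∧ u = b q ∧ v = a l then 1
        else 1 / 2) := rfl
    rw [if_neg huv] at this
    rw [this] at h
    by_cases h2 : ∃ l q, l ≠ q ∧ u = b q ∧ v = a l
    · exact hc h2
    · rw [if_neg h2] at h
      split_ifs at h <;> norm_num at h
  -- triangle inequalities
  have tri : ∀ i j k, i ≠ j → i ≠ k → j ≠ k → 0 ≤ x i j + x j k - x i k := by
    intro i j k hij hik hjk
    rcases hx_values i k with h | h | h
    · have := hx_nonneg i j; have := hx_nonneg j k; rw [h]; linarith
    · rw [h]
      rcases hx_values i j with h1 | h1 | h1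
      · obtain ⟨l, q, hlq, hi, hj⟩ := hx_zero_imp i j hij h1
        rcases hx_values j k with h2 | h2 | h2
        · obtain ⟨l', q', hlq', hj', hk⟩ := hx_zero_imp j k hjk h2
          exact absurd (hj.symm.trans hj') (hba q l')
        · linarith [hx_nonneg i j]
        · linarith [hx_nonneg i j]
      · linarith [hx_nonneg j k]
      · linarith [hx_nonneg j k]
    · obtain ⟨l, q, hlq, hi, hk⟩ := hx_one_imp i k hik h
      subst hi; subst hk
      rw [h]
      rcases hcov j with ⟨p, rfl⟩ | ⟨p, rfl⟩
      · by_cases hpq : p = q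
        · subst hpq
          have hpl : p ≠ l := fun hh => hjk (by rw [hh])
          rw [hx_ba_eq p, hx_aa p l hpl]; norm_num
        · rw [hx_ba_ne p q hpq]
          linarith [hx_nonneg (a p) (a l)]
      · have hpq : p ≠ q := fun hh => hij (by rw [hh])
        by_cases hpl : p = l
        · subst hpl
          rw [hx_bb q p hpq.symm, hx_ba_eq p]; norm_num
        · rw [hx_ba_ne l p (fun hh => hpl hh.symm)]
          linarith [hx_nonneg (b q) (b p)]
  have tri' : ∀ i j k, i ≠ j → i ≠ k → j ≠ k → x i j + x j k - x i k ≤ 1 := by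
    intro i j k hij hik hjk
    have h := tri k j i hjk.symm hik.symm hij.symm
    have a1 := hx_anti i j hij
    have a2 := hx_anti j k hjk
    have a3 := hx_anti i k hik
    linarith
  have hmem : IsBn x :=
    ⟨hx_diag, fun i j h => ⟨hx_nonneg i j, hx_le_one i j⟩, fun i j h => hx_anti i j h,
      fun i j k h1 h2 h3 => ⟨tri i j k h1 h2 h3, tri' i j k h1 h2 h3⟩⟩
  -- picking three distinct indices
  have hpick : ∀ l : Fin m, ∃ q r : Fin m, q ≠ r ∧ l ≠ q ∧ l ≠ r := by
    intro l
    have h0 : (0:ℕ) < m := by omega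
    have h1 : (1:ℕ) < m := by omega
    have h2 : (2:ℕ) < m := by omega
    by_cases e0 : l = ⟨0, h0⟩
    · exact ⟨⟨1,h1⟩, ⟨2,h2⟩, by simp [Fin.ext_iff], by simp [e0, Fin.ext_iff],
        by simp [e0, Fin.ext_iff]⟩
    · by_cases e1 : l = ⟨1, h1⟩
      · exact ⟨⟨0,h0⟩, ⟨2,h2⟩, by simp [Fin.ext_iff], by simp [e1, Fin.ext_iff],
          by simp [e1, Fin.ext_iff]⟩
      · exact ⟨⟨0,h0⟩, ⟨1,h1⟩, by simp [Fin.ext_iff], e0, e1⟩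
  -- the main rigidity lemma
  have main : ∀ w : Fin (2*m) → Fin (2*m) → ℝ, IsBn w →
      (∀ l q : Fin m, l ≠ q → w (a l) (b q) = 0) →
      (∀ l q : Fin m, l ≠ q → w (b q) (a l) = 1) →
      (∀ i j k, i ≠ j → i ≠ k → j ≠ k →
        x i j + x j k - x i k = 1 → w i j + w j k - w i k = 1) →
      w = x := by
    intro w hw wpin0 wpin1 wtight
    obtain ⟨wd, wb, wanti, wtri⟩ := hw
    have eq1 : ∀ l q : Fin m, l ≠ q → w (a l) (b l) = w (a l) (a q) := by
      intro l q hlq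
      have ht : x (a l) (b l) + x (b l) (a q) - x (a l) (a q) = 1 := by
        rw [hx_ab_eq l, hx_ba_ne q l hlq.symm, hx_aa l q hlq]; norm_num
      have hE := wtight (a l) (b l) (a q) (hab l l) (haa l q hlq) (hba l q) ht
      have h1 := wpin1 q l hlq.symm
      linarith
    have eq2 : ∀ l q : Fin m, l ≠ q → w (a l) (b l) + w (b l) (b q) = 1 := by
      intro l q hlq
      have ht : x (a l) (b l) + x (b l) (b q) - x (a l) (b q) = 1 := by
        rw [hx_ab_eq l, hx_bb l q hlq, hx_ab_ne l q hlq]; norm_num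
      have hE := wtight (a l) (b l) (b q) (hab l l) (hab l q) (hbb l q hlq) ht
      have h1 := wpin0 l q hlq
      linarith
    have hg_sum : ∀ l q : Fin m, l ≠ q → w (a l) (b l) + w (a q) (b q) = 1 := by
      intro l q hlq
      have h1 := eq1 l q hlq
      have h2 := eq1 q l hlq.symm
      have h3 := wanti (a l) (a q) (haa l q hlq)
      linarith
    have hg : ∀ l : Fin m, w (a l) (b l) = 1/2 := by
      intro l
      obtain ⟨q, r, hqr, hlq, hlr⟩ := hpick l
      have h1 := hg_sum l q hlq
      have h2 := hg_sum l r hlr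
      have h3 := hg_sum q r hqr
      linarith
    have w_ab_eq : ∀ l, w (a l) (b l) = 1/2 := hg
    have w_aa : ∀ l q : Fin m, l ≠ q → w (a l) (a q) = 1/2 := by
      intro l q hlq; rw [← eq1 l q hlq, hg l]
    have w_bb : ∀ l q : Fin m, l ≠ q → w (b l) (b q) = 1/2 := by
      intro l q hlq; have := eq2 l q hlq; rw [hg l] at this; linarith
    have w_ba_eq : ∀ l, w (b l) (a l) = 1/2 := by
      intro l
      have := wanti (a l) (b l) (hab l l)
      rw [hg l] at this; linarith
    funext u v
    by_cases huv : u = v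
    · subst huv; rw [wd u, hx_diag u]
    rcases hcov u with ⟨l, rfl⟩ | ⟨l, rfl⟩ <;> rcases hcov v with ⟨q, rfl⟩ | ⟨q, rfl⟩
    · have hlq : l ≠ q := fun h => huv (by rw [h])
      rw [w_aa l q hlq, hx_aa l q hlq]
    · by_cases h : l = q
      · subst h; rw [w_ab_eq l, hx_ab_eq l]
      · rw [wpin0 l q h, hx_ab_ne l q h]
    · by_cases h : q = l
      · subst h; rw [w_ba_eq q, hx_ba_eq q]
      · rw [wpin1 q l h, hx_ba_ne q l h]
    · have hlq : l ≠ q := fun h => huv (by rw [h])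
      rw [w_bb l q hlq, hx_bb l q hlq]
  -- extreme point
  rw [mem_extremePoints]
  refine ⟨hmem, ?_⟩
  intro y hy z hz hseg
  obtain ⟨t, s, ht, hs, hts, heq⟩ := hseg
  have hcomb : ∀ u v, t * y u v + s * z u v = x u v := by
    intro u v
    have h := congrFun (congrFun heq u) v
    simpa using h
  obtain ⟨hyd, hybound, hyanti, hytri⟩ := hy
  obtain ⟨hzd, hzbound, hzanti, hztri⟩ := hz
  have pin : ∀ u v, u ≠ v → (x u v = 0 → y u v = 0 ∧ z u v = 0) ∧
      (x u v = 1 → y u v = 1 ∧ z u v = 1) := by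
    intro u v huv
    have h := hcomb u v
    have hy0 := (hybound u v huv).1
    have hy1 := (hybound u v huv).2
    have hz0 := (hzbound u v huv).1
    have hz1 := (hzbound u v huv).2
    have m1 : 0 ≤ t * y u v := mul_nonneg ht.le hy0
    have m2 : 0 ≤ s * z u v := mul_nonneg hs.le hz0
    have m3 : 0 ≤ t * (1 - y u v) := mul_nonneg ht.le (by linarith)
    have m4 : 0 ≤ s * (1 - z u v) := mul_nonneg hs.le (by linarith)
    constructor
    · intro h0
      rw [h0] at h
      have e1 : t * y u v = 0 := by linarith
      have e2 : s * z u v = 0 := by linarith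
      exact ⟨by
        rcases mul_eq_zero.mp e1 with h' | h'
        · exact absurd h' (ne_of_gt ht)
        · exact h', by
        rcases mul_eq_zero.mp e2 with h' | h'
        · exact absurd h' (ne_of_gt hs)
        · exact h'⟩
    · intro h1
      rw [h1] at h
      have key : t * (1 - y u v) + s * (1 - z u v) = 0 := by ring_nf; ring_nf at h; linarith
      have e1 : t * (1 - y u v) = 0 := by linarith
      have e2 : s * (1 - z u v) = 0 := by linarith
      constructor
      · rcases mul_eq_zero.mp e1 with h' | h'
        · exact absurd h' (ne_of_gt ht)
        · linarith
      · rcases mul_eq_zero.mp e2 with h' | h'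
        · exact absurd h' (ne_of_gt hs)
        · linarith
  have pintri : ∀ i j k, i ≠ j → i ≠ k → j ≠ k →
      x i j + x j k - x i k = 1 →
      (y i j + y j k - y i k = 1 ∧ z i j + z j k - z i k = 1) := by
    intro i j k h1 h2 h3 hx1
    have hyub := (hytri i j k h1 h2 h3).2
    have hzub := (hztri i j k h1 h2 h3).2
    have e1 := hcomb i j
    have e2 := hcomb j k
    have e3 := hcomb i k
    have key : t * (y i j + y j k - y i k) + s * (z i j + z j k - z i k) = 1 := by
      linear_combination e1 + e2 - e3 + hx1
    have m3 : 0 ≤ t * (1 - (y i j + y j k - y i k)) := mul_nonneg ht.le (by linarith)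
    have m4 : 0 ≤ s * (1 - (z i j + z j k - z i k)) := mul_nonneg hs.le (by linarith)
    have ksum : t * (1 - (y i j + y j k - y i k)) + s * (1 - (z i j + z j k - z i k)) = 0 := by
      linear_combination hts - key
    have e4 : t * (1 - (y i j + y j k - y i k)) = 0 := by linarith
    have e5 : s * (1 - (z i j + z j k - z i k)) = 0 := by linarith
    constructor
    · rcases mul_eq_zero.mp e4 with h' | h'
      · exact absurd h' (ne_of_gt ht)
      · linarith
    · rcases mul_eq_zero.mp e5 with h' | h'
      · exact absurd h' (ne_of_gt hs)
      · linarith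
  have ypin0 : ∀ l q : Fin m, l ≠ q → y (a l) (b q) = 0 :=
    fun l q h => ((pin _ _ (hab l q)).1 (hx_ab_ne l q h)).1
  have zpin0 : ∀ l q : Fin m, l ≠ q → z (a l) (b q) = 0 :=
    fun l q h => ((pin _ _ (hab l q)).1 (hx_ab_ne l q h)).2
  have ypin1 : ∀ l q : Fin m, l ≠ q → y (b q) (a l) = 1 :=
    fun l q h => ((pin _ _ (hba q l)).2 (hx_ba_ne l q h)).1
  have zpin1 : ∀ l q : Fin m, l ≠ q → z (b q) (a l) = 1 :=
    fun l q h => ((pin _ _ (hba q l)).2 (hx_ba_ne l q h)).2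
  constructor
  · exact main y ⟨hyd, hybound, hyanti, hytri⟩ ypin0 ypin1
      (fun i j k h1 h2 h3 hx1 => (pintri i j k h1 h2 h3 hx1).1)
  · exact main z ⟨hzd, hzbound, hzanti, hztri⟩ zpin0 zpin1
      (fun i j k h1 h2 h3 hx1 => (pintri i j k h1 h2 h3 hx1).2)
end

section
/- Let m ≥ 2, n ≥ 2m, and let a, b : Fin m → Fin n be injective maps with disjoint ranges (write i_l = a(l), j_l = b(l)). Let x⁰ : Fin n → Fin n → ℝ be defined by x⁰(i_l, j_q) = 0 and x⁰(j_q, i_l) = 1 for all l ≠ q, x⁰(u,u) = 0 for all u, and x⁰(u,v) = 1/2 for every other pair u ≠ v. Then f(x⁰) = m/2, where f(x) = 2·∑_{l} x(i_l, j_l) − ∑_{l} ∑_{q} x(i_l, j_q). In particular, for m ≥ 3 the point x⁰ violates the fence inequality f(x) ≤ 1. -/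
open scoped BigOperators

/-- The fence function `f(x) = 2·∑ l, x(a l, b l) − ∑ l, ∑ q, x(a l, b q)`. -/
noncomputable def fence {m n : ℕ} (a b : Fin m → Fin n)
    (x : Fin n → Fin n → ℝ) : ℝ :=
  2 * ∑ l, x (a l) (b l) - ∑ l, ∑ q, x (a l) (b q)


lemma xZero_ab {m n : ℕ} (a b : Fin m → Fin n) (ha : Function.Injective a)
    (hb : Function.Injective b) (hab : ∀ l q, a l ≠ b q) (l q : Fin m) :
    xZero a b (a l) (b q) = if l = q then 1/2 else 0 := by
  unfold xZero
  rw [if_neg (hab l q)]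
  by_cases h : l = q
  · subst h
    rw [if_neg, if_neg, if_pos rfl]
    · rintro ⟨l', q', hne, h1, h2⟩
      exact hab l q' h1
    · rintro ⟨l', q', hne, h1, h2⟩
      exact hne ((ha h1).symm.trans (hb h2))
  · rw [if_pos ⟨l, q, h, rfl, rfl⟩, if_neg h]

theorem fence_at_xZero {m n : ℕ} (hm : 2 ≤ m) (hn : 2 * m ≤ n)
    (a b : Fin m → Fin n) (ha : Function.Injective a) (hb : Function.Injective b)
    (hab : ∀ l q, a l ≠ b q) :
    fence a b (xZero a b) = (m : ℝ) / 2 ∧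
    (3 ≤ m → ¬ fence a b (xZero a b) ≤ 1) := by
  have key : fence a b (xZero a b) = (m : ℝ) / 2 := by
    unfold fence
    have h1 : ∀ l q : Fin m, xZero a b (a l) (b q) = if l = q then 1/2 else 0 :=
      xZero_ab a b ha hb hab
    simp only [h1, if_pos rfl, Finset.sum_ite_eq, Finset.mem_univ, if_true,
      Finset.sum_const, Finset.card_univ, Fintype.card_fin, nsmul_eq_mul]
    ring
  refine ⟨key, fun h3 hle => ?_⟩
  rw [key] at hle
  have : (3 : ℝ) ≤ m := by exact_mod_cast h3
  linarith
end

section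
/- Let m ≥ 3, n ≥ 2m, and let a, b : Fin m → Fin n be injective maps with disjoint ranges (write i_l = a(l), j_l = b(l)). Let x⁰ : Fin n → Fin n → ℝ be defined by x⁰(i_l, j_q) = 0 and x⁰(j_q, i_l) = 1 for all l ≠ q, x⁰(u,u) = 0 for all u, and x⁰(u,v) = 1/2 for every other pair u ≠ v. Then x⁰ does not belong to the convex hull P_n of the incidence vectors of strict total orders on Fin n. In particular, for n ≥ 6 the relaxation B_n strictly contains the linear ordering polytope P_n. -/
open scoped BigOperators

lemma chi_le_one' {n : ℕ} (r : Fin n → Fin n → Prop) (u v : Fin n) :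
    chi r u v ≤ 1 := by
  unfold chi; split_ifs <;> norm_num

lemma chi_cycle' {n : ℕ} {r : Fin n → Fin n → Prop} (hi : ∀ i, ¬ r i i)
    (ht : ∀ i j k, r i j → r j k → r i k) (u v w z : Fin n) :
    chi r u v + chi r v w + chi r w z + chi r z u ≤ 3 := by
  have key : ¬(r u v ∧ r v w ∧ r w z ∧ r z u) :=
    fun ⟨h1, h2, h3, h4⟩ => hi u (ht _ _ _ (ht _ _ _ (ht _ _ _ h1 h2) h3) h4)
  by_cases h1 : r u v <;> by_cases h2 : r v w <;> by_cases h3 : r w z <;> by_cases h4 : r z u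
  · exact absurd ⟨h1, h2, h3, h4⟩ key
  all_goals norm_num [chi, h1, h2, h3, h4]

lemma chi_F_le' {n : ℕ} {r : Fin n → Fin n → Prop} (hi : ∀ i, ¬ r i i)
    (ht : ∀ i j k, r i j → r j k → r i k) (i1 i2 i3 j1 j2 j3 : Fin n) :
    chi r i1 j1 + chi r i2 j2 + chi r i3 j3 + chi r j1 i2 + chi r j1 i3 +
      chi r j2 i1 + chi r j2 i3 + chi r j3 i1 + chi r j3 i2 ≤ 7 := by
  have c12 := chi_cycle' hi ht i1 j1 i2 j2
  have c13 := chi_cycle' hi ht i1 j1 i3 j3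
  have c23 := chi_cycle' hi ht i2 j2 i3 j3
  have d1 : chi r i1 j1 = 1 ∨ chi r i1 j1 = 0 := by unfold chi; split_ifs <;> simp
  have d2 : chi r i2 j2 = 1 ∨ chi r i2 j2 = 0 := by unfold chi; split_ifs <;> simp
  have d3 : chi r i3 j3 = 1 ∨ chi r i3 j3 = 0 := by unfold chi; split_ifs <;> simp
  rcases d1 with d1 | d1 <;> rcases d2 with d2 | d2 <;> rcases d3 with d3 | d3 <;>
    linarith [chi_le_one' r j1 i2, chi_le_one' r j1 i3, chi_le_one' r j2 i1,
      chi_le_one' r j2 i3, chi_le_one' r j3 i1, chi_le_one' r j3 i2]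

lemma xZero_diag' {m n : ℕ} (a b : Fin m → Fin n) (ha : Function.Injective a)
    (hb : Function.Injective b) (hab : ∀ l q, a l ≠ b q) (p : Fin m) :
    xZero a b (a p) (b p) = 1 / 2 := by
  have h2 : ¬ ∃ l q, l ≠ q ∧ a p = a l ∧ b p = b q := by
    rintro ⟨l, q, hne, hl, hq⟩
    exact hne ((ha hl).symm.trans (hb hq))
  have h3 : ¬ ∃ l q, l ≠ q ∧ a p = b q ∧ b p = a l := by
    rintro ⟨l, q, _, hl, _⟩
    exact hab p q hl
  simp only [xZero]
  rw [if_neg (hab p p), if_neg h2, if_neg h3]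

lemma xZero_off' {m n : ℕ} (a b : Fin m → Fin n)
    (hab : ∀ l q, a l ≠ b q) {p q : Fin m} (hpq : p ≠ q) :
    xZero a b (b q) (a p) = 1 := by
  have h1 : b q ≠ a p := fun h => hab p q h.symm
  have h2 : ¬ ∃ l q', l ≠ q' ∧ b q = a l ∧ a p = b q' := by
    rintro ⟨l, q', _, hl, _⟩
    exact hab l q hl.symm
  have h3 : ∃ l q', l ≠ q' ∧ b q = b q' ∧ a p = a l := ⟨p, q, hpq, rfl, rfl⟩
  simp only [xZero]
  rw [if_neg h1, if_neg h2, if_pos h3]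

theorem xZero_not_mem_Pn {m n : ℕ} (hm : 3 ≤ m) (hn : 2 * m ≤ n)
    (a b : Fin m → Fin n) (ha : Function.Injective a) (hb : Function.Injective b)
    (hab : ∀ l q, a l ≠ b q) :
    xZero a b ∉
      convexHull ℝ {x : Fin n → Fin n → ℝ | ∃ r, IsSTO r ∧ x = chi r} := by
  intro hmem
  obtain ⟨q0, q1, q2, h01, h02, h12⟩ :
      ∃ q0 q1 q2 : Fin m, q0 ≠ q1 ∧ q0 ≠ q2 ∧ q1 ≠ q2 :=
    ⟨⟨0, by omega⟩, ⟨1, by omega⟩, ⟨2, by omega⟩,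
      by simp [Fin.ext_iff], by simp [Fin.ext_iff], by simp [Fin.ext_iff]⟩
  set T : Set (Fin n → Fin n → ℝ) :=
    {x | x (a q0) (b q0) + x (a q1) (b q1) + x (a q2) (b q2) +
      x (b q0) (a q1) + x (b q0) (a q2) + x (b q1) (a q0) +
      x (b q1) (a q2) + x (b q2) (a q0) + x (b q2) (a q1) ≤ 7} with hT
  have hconv : Convex ℝ T := by
    intro x hx y hy s t hs ht hst
    simp only [hT, Set.mem_setOf_eq, Pi.add_apply, Pi.smul_apply, smul_eq_mul] at *
    nlinarith [mul_le_mul_of_nonneg_left hx hs, mul_le_mul_of_nonneg_left hy ht]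
  have hsub : {x : Fin n → Fin n → ℝ | ∃ r, IsSTO r ∧ x = chi r} ⊆ T := by
    rintro x ⟨r, ⟨hirr, htrans, _⟩, rfl⟩
    simp only [hT, Set.mem_setOf_eq]
    exact chi_F_le' hirr htrans _ _ _ _ _ _
  have hle : xZero a b ∈ T := convexHull_min hsub hconv hmem
  simp only [hT, Set.mem_setOf_eq] at hle
  rw [xZero_diag' a b ha hb hab q0, xZero_diag' a b ha hb hab q1,
    xZero_diag' a b ha hb hab q2, xZero_off' a b hab h01, xZero_off' a b hab h02,
    xZero_off' a b hab h01.symm, xZero_off' a b hab h12, xZero_off' a b hab h02.symm,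
    xZero_off' a b hab h12.symm] at hle
  norm_num at hle
end
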